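/- arXiv:1908.00710 — 5 statements merged into one kernel-verified Lean document; each statement's English description precedes it below -/
import Mathlib

section
/- Let λ3 and λ4 be real numbers with λ4 > λ3². With ξ1, ξ2, p1, p2 defined by ξ2 = λ3/2 + √(λ4 − 3λ3²/4), ξ1 = λ3/2 − √(λ4 − 3λ3²/4), p1 = 1/(ξ1(ξ1 − ξ2)), p2 = −1/(ξ2(ξ1 − ξ2)), one has p1·ξ1³ + p2·ξ2³ = λ3. -/
/-! The weights are chosen so that `pᵢ ξᵢ³ = ± ξᵢ² / (ξ₁ - ξ₂)`; the two terms therefore sum to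
`(ξ₁² - ξ₂²) / (ξ₁ - ξ₂) = ξ₁ + ξ₂`, and the square roots in `ξ₁` and `ξ₂` cancel in this sum,
leaving `λ₃`. -/

-- Also true for `x = 0`, where both sides are `0` thanks to `1 / 0 = 0`.
theorem one_div_mul_mul_pow_three {K : Type*} [Field K] (x d : K) :
    1 / (x * d) * x ^ 3 = x ^ 2 / d := by
  rcases eq_or_ne x 0 with rfl | hx
  · simp
  · field_simp

theorem two_point_weights_third_moment {K : Type*} [Field K] {x y : K} (hxy : x ≠ y) :
    1 / (x * (x - y)) * x ^ 3 + -1 / (y * (x - y)) * y ^ 3 = x + y := by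
  have hsub : x - y ≠ 0 := sub_ne_zero.mpr hxy
  rw [neg_div, neg_mul, one_div_mul_mul_pow_three, one_div_mul_mul_pow_three]
  field_simp
  ring

theorem hong_third_moment_matching (lam3 lam4 xi1 xi2 p1 p2 : ℝ) (h : lam4 > lam3 ^ 2)
    (hxi2 : xi2 = lam3 / 2 + Real.sqrt (lam4 - 3 * lam3 ^ 2 / 4))
    (hxi1 : xi1 = lam3 / 2 - Real.sqrt (lam4 - 3 * lam3 ^ 2 / 4))
    (hp1 : p1 = 1 / (xi1 * (xi1 - xi2)))
    (hp2 : p2 = -1 / (xi2 * (xi1 - xi2))) :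
    p1 * xi1 ^ 3 + p2 * xi2 ^ 3 = lam3 := by
  have hsqrt_pos : 0 < Real.sqrt (lam4 - 3 * lam3 ^ 2 / 4) :=
    Real.sqrt_pos.mpr (by nlinarith [sq_nonneg lam3])
  have hne : xi1 ≠ xi2 := by
    rw [hxi1, hxi2]
    linarith
  rw [hp1, hp2, two_point_weights_third_moment hne, hxi1, hxi2]
  ring
end

section
/- Let λ3 and λ4 be real numbers with λ4 > λ3². With ξ1, ξ2, p1, p2 defined by ξ2 = λ3/2 + √(λ4 − 3λ3²/4), ξ1 = λ3/2 − √(λ4 − 3λ3²/4), p1 = 1/(ξ1(ξ1 − ξ2)), p2 = −1/(ξ2(ξ1 − ξ2)), one has p1·ξ1⁴ + p2·ξ2⁴ = λ4. -/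
/-! ξ₁ and ξ₂ are the roots of `x² - λ₃ x - (λ₄ - λ₃²)`, so `ξ₁ + ξ₂ = λ₃` and
`ξ₁ ξ₂ = λ₃² - λ₄`. With the weights `p₁, p₂` the fourth moment collapses to
`(ξ₁³ - ξ₂³) / (ξ₁ - ξ₂) = (ξ₁ + ξ₂)² - ξ₁ ξ₂ = λ₄`. -/

lemma one_div_mul_mul_pow_four (a c : ℝ) : 1 / (a * c) * a ^ 4 = a ^ 3 / c := by
  rcases eq_or_ne a 0 with rfl | ha
  · simp
  · field_simp

lemma two_point_fourth_moment {a b : ℝ} (hab : a ≠ b) :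
    1 / (a * (a - b)) * a ^ 4 + -1 / (b * (a - b)) * b ^ 4 = a ^ 2 + a * b + b ^ 2 := by
  have hsub : a - b ≠ 0 := sub_ne_zero.mpr hab
  rw [neg_div, neg_mul, one_div_mul_mul_pow_four, one_div_mul_mul_pow_four]
  field_simp
  ring

lemma hong_locations_sum_mul (lam3 lam4 : ℝ) (h : 3 * lam3 ^ 2 / 4 ≤ lam4) :
    (lam3 / 2 - √(lam4 - 3 * lam3 ^ 2 / 4)) + (lam3 / 2 + √(lam4 - 3 * lam3 ^ 2 / 4)) = lam3 ∧
    (lam3 / 2 - √(lam4 - 3 * lam3 ^ 2 / 4)) * (lam3 / 2 + √(lam4 - 3 * lam3 ^ 2 / 4)) =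
      lam3 ^ 2 - lam4 := by
  refine ⟨by ring, ?_⟩
  linear_combination -Real.sq_sqrt (sub_nonneg.mpr h)

theorem hong_fourth_moment_matching (lam3 lam4 xi1 xi2 p1 p2 : ℝ) (h : lam4 > lam3 ^ 2)
    (hxi2 : xi2 = lam3 / 2 + Real.sqrt (lam4 - 3 * lam3 ^ 2 / 4))
    (hxi1 : xi1 = lam3 / 2 - Real.sqrt (lam4 - 3 * lam3 ^ 2 / 4))
    (hp1 : p1 = 1 / (xi1 * (xi1 - xi2)))
    (hp2 : p2 = -1 / (xi2 * (xi1 - xi2))) :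
    p1 * xi1 ^ 4 + p2 * xi2 ^ 4 = lam4 := by
  have hdisc : 0 < lam4 - 3 * lam3 ^ 2 / 4 := by nlinarith [sq_nonneg lam3]
  have hne : xi1 ≠ xi2 := by
    rw [hxi1, hxi2]
    linarith [Real.sqrt_pos.mpr hdisc]
  obtain ⟨hsum, hmul⟩ := hong_locations_sum_mul lam3 lam4 (by linarith)
  rw [← hxi1, ← hxi2] at hsum hmul
  rw [hp1, hp2, two_point_fourth_moment hne]
  linear_combination hsum * (xi1 + xi2 + lam3) - hmul
end

section
/- Let λ3 and λ4 be real numbers with λ4 > λ3², and define p3 = 1 − p1 − p2 with p1 = 1/(ξ1(ξ1 − ξ2)), p2 = −1/(ξ2(ξ1 − ξ2)), ξ2 = λ3/2 + √(λ4 − 3λ3²/4), ξ1 = λ3/2 − √(λ4 − 3λ3²/4). Then p3 ≥ 0 if and only if λ4 ≥ λ3² + 1. -/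
/-! The nodes `ξ₁, ξ₂ = λ₃/2 ∓ √(λ₄ - 3λ₃²/4)` satisfy `ξ₁ξ₂ = λ₃² - λ₄ < 0`, and the outer weights
add up to `-1/(ξ₁ξ₂) = 1/(λ₄ - λ₃²)`. Hence `p₃ = 1 - 1/(λ₄ - λ₃²)`, which is nonnegative exactly
when `λ₄ - λ₃² ≥ 1`. -/

theorem sub_sqrt_mul_add_sqrt (a : ℝ) {b : ℝ} (hb : 0 ≤ b) :
    (a - √b) * (a + √b) = a ^ 2 - b := by
  linear_combination -Real.sq_sqrt hb

theorem one_div_mul_sub_add_neg_one_div_mul_sub {K : Type*} [Field K] {x y : K}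
    (hx : x ≠ 0) (hy : y ≠ 0) (hxy : x ≠ y) :
    1 / (x * (x - y)) + -1 / (y * (x - y)) = -1 / (x * y) := by
  have : x - y ≠ 0 := sub_ne_zero.mpr hxy
  field_simp
  ring

theorem hong_outer_weights_sum {lam3 lam4 xi1 xi2 : ℝ} (h : lam3 ^ 2 < lam4)
    (hxi1 : xi1 = lam3 / 2 - √(lam4 - 3 * lam3 ^ 2 / 4))
    (hxi2 : xi2 = lam3 / 2 + √(lam4 - 3 * lam3 ^ 2 / 4)) :
    1 / (xi1 * (xi1 - xi2)) + -1 / (xi2 * (xi1 - xi2)) = 1 / (lam4 - lam3 ^ 2) := by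
  have hb : 0 < lam4 - 3 * lam3 ^ 2 / 4 := by linarith [sq_nonneg lam3]
  have hprod : xi1 * xi2 = -(lam4 - lam3 ^ 2) := by
    rw [hxi1, hxi2, sub_sqrt_mul_add_sqrt _ hb.le]
    ring
  have hprod_ne : xi1 * xi2 ≠ 0 := by
    rw [hprod]
    linarith
  have hne : xi1 ≠ xi2 := by
    have := Real.sqrt_pos.2 hb
    rw [hxi1, hxi2]
    linarith
  rw [one_div_mul_sub_add_neg_one_div_mul_sub (left_ne_zero_of_mul hprod_ne)
    (right_ne_zero_of_mul hprod_ne) hne, hprod, div_neg, neg_div, neg_neg]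

theorem hong_mean_weight_nonneg_iff (lam3 lam4 xi1 xi2 p1 p2 p3 : ℝ) (h : lam4 > lam3 ^ 2)
    (hxi2 : xi2 = lam3 / 2 + Real.sqrt (lam4 - 3 * lam3 ^ 2 / 4))
    (hxi1 : xi1 = lam3 / 2 - Real.sqrt (lam4 - 3 * lam3 ^ 2 / 4))
    (hp1 : p1 = 1 / (xi1 * (xi1 - xi2)))
    (hp2 : p2 = -1 / (xi2 * (xi1 - xi2)))
    (hp3 : p3 = 1 - p1 - p2) :
    0 ≤ p3 ↔ lam4 ≥ lam3 ^ 2 + 1 := by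
  rw [hp3, sub_sub, hp1, hp2, hong_outer_weights_sum h hxi1 hxi2, sub_nonneg,
    div_le_one (sub_pos.2 h), ge_iff_le, le_sub_iff_add_le']
end

section
/- Suppose the real numbers ξ1 < ξ2, p1 and p2 satisfy the four moment-matching equations p1·ξ1 + p2·ξ2 = 0, p1·ξ1² + p2·ξ2² = 1, p1·ξ1³ + p2·ξ2³ = λ3 and p1·ξ1⁴ + p2·ξ2⁴ = λ4 for given real numbers λ3 and λ4 with λ4 > λ3². Then necessarily ξ2 = λ3/2 + √(λ4 − 3λ3²/4), ξ1 = λ3/2 − √(λ4 − 3λ3²/4), p1 = 1/(ξ1(ξ1 − ξ2)) and p2 = −1/(ξ2(ξ1 − ξ2)). -/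
/-! Both locations are roots of `t² - λ₃ t + (λ₃² - λ₄)`: combining the moment equations with
multipliers `1, -(ξ₁ + ξ₂), ξ₁ ξ₂` (resp. one degree higher) yields Vieta's relations
`ξ₁ + ξ₂ = λ₃` and `ξ₁ ξ₂ = λ₃² - λ₄`. Since `λ₄ > λ₃²` the roots have opposite signs, the
quadratic formula gives `ξ₁, ξ₂`, and the first two moment equations form a nonsingular
linear system for `p₁, p₂`. -/

section TwoPointMoments

variable {p₁ p₂ ξ₁ ξ₂ : ℝ}

theorem add_eq_of_two_point_moments {m₃ : ℝ}
    (h₁ : p₁ * ξ₁ + p₂ * ξ₂ = 0) (h₂ : p₁ * ξ₁ ^ 2 + p₂ * ξ₂ ^ 2 = 1)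
    (h₃ : p₁ * ξ₁ ^ 3 + p₂ * ξ₂ ^ 3 = m₃) :
    ξ₁ + ξ₂ = m₃ := by
  linear_combination h₃ + ξ₁ * ξ₂ * h₁ - (ξ₁ + ξ₂) * h₂

theorem mul_eq_of_two_point_moments {m₃ m₄ : ℝ}
    (h₁ : p₁ * ξ₁ + p₂ * ξ₂ = 0) (h₂ : p₁ * ξ₁ ^ 2 + p₂ * ξ₂ ^ 2 = 1)
    (h₃ : p₁ * ξ₁ ^ 3 + p₂ * ξ₂ ^ 3 = m₃) (h₄ : p₁ * ξ₁ ^ 4 + p₂ * ξ₂ ^ 4 = m₄) :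
    ξ₁ * ξ₂ = m₃ ^ 2 - m₄ := by
  have hs := add_eq_of_two_point_moments h₁ h₂ h₃
  linear_combination m₃ * hs + (ξ₁ + ξ₂) * h₃ - ξ₁ * ξ₂ * h₂ - h₄

theorem two_point_weights_eq (h₁ : p₁ * ξ₁ + p₂ * ξ₂ = 0)
    (h₂ : p₁ * ξ₁ ^ 2 + p₂ * ξ₂ ^ 2 = 1) (hξ₁ : ξ₁ ≠ 0) (hξ₂ : ξ₂ ≠ 0) (hne : ξ₁ ≠ ξ₂) :
    p₁ = 1 / (ξ₁ * (ξ₁ - ξ₂)) ∧ p₂ = -1 / (ξ₂ * (ξ₁ - ξ₂)) := by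
  have hsub : ξ₁ - ξ₂ ≠ 0 := sub_ne_zero.mpr hne
  constructor
  · field_simp
    linear_combination h₂ - ξ₂ * h₁
  · field_simp
    linear_combination ξ₁ * h₁ - h₂

end TwoPointMoments

theorem eq_half_add_sqrt_of_add_of_mul {x y s d : ℝ} (hlt : x < y) (hsum : x + y = s)
    (hprod : x * y = s ^ 2 / 4 - d) :
    y = s / 2 + √d ∧ x = s / 2 - √d := by
  have hd : d = ((y - x) / 2) ^ 2 := by
    linear_combination (-(x + y + s) / 4) * hsum + hprod
  have hsqrt : √d = (y - x) / 2 := by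
    rw [hd, Real.sqrt_sq (by linarith)]
  constructor <;> linarith

theorem hong_solution_unique (lam3 lam4 xi1 xi2 p1 p2 : ℝ)
    (h : lam4 > lam3 ^ 2) (hlt : xi1 < xi2)
    (h1 : p1 * xi1 + p2 * xi2 = 0)
    (h2 : p1 * xi1 ^ 2 + p2 * xi2 ^ 2 = 1)
    (h3 : p1 * xi1 ^ 3 + p2 * xi2 ^ 3 = lam3)
    (h4 : p1 * xi1 ^ 4 + p2 * xi2 ^ 4 = lam4) :
    xi2 = lam3 / 2 + Real.sqrt (lam4 - 3 * lam3 ^ 2 / 4) ∧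
    xi1 = lam3 / 2 - Real.sqrt (lam4 - 3 * lam3 ^ 2 / 4) ∧
    p1 = 1 / (xi1 * (xi1 - xi2)) ∧
    p2 = -1 / (xi2 * (xi1 - xi2)) := by
  have hsum := add_eq_of_two_point_moments h1 h2 h3
  have hprod := mul_eq_of_two_point_moments h1 h2 h3 h4
  have hneg : xi1 * xi2 < 0 := by linarith
  have hxi1 : xi1 < 0 := by nlinarith
  have hxi2 : 0 < xi2 := by nlinarith
  obtain ⟨hxi2_eq, hxi1_eq⟩ := eq_half_add_sqrt_of_add_of_mul hlt hsum
    (d := lam4 - 3 * lam3 ^ 2 / 4) (by rw [hprod]; ring)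
  exact ⟨hxi2_eq, hxi1_eq, two_point_weights_eq h1 h2 hxi1.ne hxi2.ne' hlt.ne⟩
end

section
/- Let X be a real-valued random variable on a probability space with E[X⁴] < ∞ and strictly positive variance; set μ = E[X], σ = √(Var X), λ3 = E[(X − μ)³]/σ³, λ4 = E[(X − μ)⁴]/σ⁴, ξ2 = λ3/2 + √(λ4 − 3λ3²/4), ξ1 = λ3/2 − √(λ4 − 3λ3²/4), p1 = 1/(ξ1(ξ1 − ξ2)), p2 = −1/(ξ2(ξ1 − ξ2)), p3 = 1 − p1 − p2. Then for every real polynomial h of degree at most 4, p1·h(μ + ξ1σ) + p2·h(μ + ξ2σ) + p3·h(μ) = E[h(X)]. -/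
/-! Both sides are linear in `h`, so after expanding `h` in powers of `x - μ` it suffices that the
rule reproduces the central moments `E[(X - μ)^k]`, `k ≤ 4`. The nodes `ξ₁, ξ₂` are the roots of
`t² - λ₃ t + (λ₃² - λ₄)`, and for the given weights `p₁ ξ₁^k + p₂ ξ₂^k` is `0, 1, λ₃, λ₄` for
`k = 1, …, 4`. The one analytic input is Pearson's inequality `λ₄ ≥ λ₃² + 1`, which makes the
nodes distinct and nonzero. -/

open MeasureTheory ProbabilityTheory
open Polynomial Finset

section Moments

variable {Ω : Type*} [MeasurableSpace Ω] {μ : Measure Ω}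

theorem MeasureTheory.MemLp.integrable_pow_of_le [IsFiniteMeasure μ] {Y : Ω → ℝ} {n k : ℕ}
    (hY : MemLp Y n μ) (hk : k ≤ n) : Integrable (fun ω ↦ Y ω ^ k) μ := by
  refine (integrable_norm_iff (hY.aestronglyMeasurable.pow k)).mp ?_
  simpa only [Pi.pow_apply, norm_pow] using
    (hY.mono_exponent (by exact_mod_cast hk)).integrable_norm_pow'

theorem integral_eval_eq_sum_coeff_mul_integral_pow [IsFiniteMeasure μ] {Y : Ω → ℝ} {n : ℕ}
    (hY : MemLp Y n μ) {q : ℝ[X]} (hq : q.natDegree ≤ n) :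
    ∫ ω, q.eval (Y ω) ∂μ = ∑ k ∈ range (n + 1), q.coeff k * ∫ ω, Y ω ^ k ∂μ := by
  simp_rw [eval_eq_sum_range' (Nat.lt_succ_of_le hq)]
  rw [integral_finsetSum _ fun k hk ↦
    (hY.integrable_pow_of_le (Nat.lt_succ_iff.mp (mem_range.mp hk))).const_mul _]
  simp_rw [integral_const_mul]

theorem sum_mul_eval_eq_integral_eval [IsFiniteMeasure μ] {ι : Type*} (t : Finset ι)
    (w x : ι → ℝ) (m : ℝ) {X : Ω → ℝ} {n : ℕ} (hX : MemLp (fun ω ↦ X ω - m) n μ)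
    (hmom : ∀ k ≤ n, ∑ i ∈ t, w i * (x i - m) ^ k = ∫ ω, (X ω - m) ^ k ∂μ)
    {h : ℝ[X]} (hh : h.natDegree ≤ n) :
    ∑ i ∈ t, w i * h.eval (x i) = ∫ ω, h.eval (X ω) ∂μ := by
  have hshift (z : ℝ) : h.eval z = (taylor m h).eval (z - m) := by
    rw [taylor_eval, sub_add_cancel]
  have hdeg : (taylor m h).natDegree ≤ n := (natDegree_taylor h m).le.trans hh
  simp_rw [hshift, integral_eval_eq_sum_coeff_mul_integral_pow hX hdeg,
    eval_eq_sum_range' (Nat.lt_succ_of_le hdeg), mul_sum]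
  rw [sum_comm]
  refine sum_congr rfl fun k hk ↦ ?_
  rw [← hmom k (Nat.lt_succ_iff.mp (mem_range.mp hk)), mul_sum]
  exact sum_congr rfl fun i _ ↦ by ring

theorem sq_integral_pow_three_add_pow_three_le [IsProbabilityMeasure μ] {Y : Ω → ℝ}
    (hY : MemLp Y 4 μ) (hmean : ∫ ω, Y ω ∂μ = 0) (hvar : 0 < ∫ ω, Y ω ^ 2 ∂μ) :
    (∫ ω, Y ω ^ 3 ∂μ) ^ 2 + (∫ ω, Y ω ^ 2 ∂μ) ^ 3 ≤ (∫ ω, Y ω ^ 4 ∂μ) * ∫ ω, Y ω ^ 2 ∂μ := by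
  set v := ∫ ω, Y ω ^ 2 ∂μ
  -- this `a` minimizes `E[(Y² - aY - v)²]`
  set a := (∫ ω, Y ω ^ 3 ∂μ) / v
  let q : ℝ[X] :=
    X ^ 4 - C (2 * a) * X ^ 3 + C (a ^ 2 - 2 * v) * X ^ 2 + C (2 * a * v) * X + C (v ^ 2)
  have hq : ∀ y, q.eval y = (y ^ 2 - a * y - v) ^ 2 := fun y ↦ by
    simp only [eval_add, eval_sub, eval_pow, eval_X, eval_mul, eval_C, q]
    ring
  have hnonneg : 0 ≤ ∫ ω, q.eval (Y ω) ∂μ := integral_nonneg fun ω ↦ (hq _).symm ▸ sq_nonneg _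
  rw [integral_eval_eq_sum_coeff_mul_integral_pow hY (by simp only [q]; compute_degree!)] at hnonneg
  simp only [sum_range_succ, sum_range_zero, q, coeff_add, coeff_sub, coeff_C_mul, coeff_X_pow,
    coeff_X, coeff_C] at hnonneg
  norm_num [hmean] at hnonneg
  have hav : a * v = ∫ ω, Y ω ^ 3 ∂μ := div_mul_cancel₀ _ hvar.ne'
  nlinarith [mul_nonneg hvar.le hnonneg]

end Moments

section Nodes

variable {lam3 lam4 xi1 xi2 p1 p2 : ℝ}

theorem hong_nodes_add_mul (hl : 3 * lam3 ^ 2 / 4 ≤ lam4)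
    (hxi2 : xi2 = lam3 / 2 + √(lam4 - 3 * lam3 ^ 2 / 4))
    (hxi1 : xi1 = lam3 / 2 - √(lam4 - 3 * lam3 ^ 2 / 4)) :
    xi1 + xi2 = lam3 ∧ xi1 * xi2 = lam3 ^ 2 - lam4 := by
  have hsq := Real.sq_sqrt (sub_nonneg.mpr hl)
  subst hxi1 hxi2
  constructor
  · ring
  · linear_combination -hsq

theorem hong_weights_sub_mul (hxi1 : xi1 ≠ 0) (hxi2 : xi2 ≠ 0)
    (hp1 : p1 = 1 / (xi1 * (xi1 - xi2))) (hp2 : p2 = -1 / (xi2 * (xi1 - xi2))) (k : ℕ) :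
    (xi1 - xi2) * (p1 * xi1 ^ (k + 1) + p2 * xi2 ^ (k + 1)) = xi1 ^ k - xi2 ^ k := by
  rcases eq_or_ne xi1 xi2 with rfl | hne
  · simp
  · subst hp1 hp2
    field_simp [sub_ne_zero.mpr hne]
    ring

theorem hong_weights_power_sums (hl : lam3 ^ 2 < lam4)
    (hxi2 : xi2 = lam3 / 2 + √(lam4 - 3 * lam3 ^ 2 / 4))
    (hxi1 : xi1 = lam3 / 2 - √(lam4 - 3 * lam3 ^ 2 / 4))
    (hp1 : p1 = 1 / (xi1 * (xi1 - xi2))) (hp2 : p2 = -1 / (xi2 * (xi1 - xi2))) :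
    p1 * xi1 + p2 * xi2 = 0 ∧ p1 * xi1 ^ 2 + p2 * xi2 ^ 2 = 1 ∧
      p1 * xi1 ^ 3 + p2 * xi2 ^ 3 = lam3 ∧ p1 * xi1 ^ 4 + p2 * xi2 ^ 4 = lam4 := by
  obtain ⟨hadd, hmul⟩ := hong_nodes_add_mul (by nlinarith [sq_nonneg lam3]) hxi2 hxi1
  have hneg : xi1 * xi2 < 0 := by linarith
  have h1 : xi1 ≠ 0 := by rintro rfl; simp at hneg
  have h2 : xi2 ≠ 0 := by rintro rfl; simp at hneg
  have hd : xi1 - xi2 ≠ 0 := by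
    rw [sub_ne_zero]
    rintro rfl
    exact (mul_self_nonneg xi1).not_gt hneg
  have e := hong_weights_sub_mul h1 h2 hp1 hp2
  refine ⟨?_, ?_, ?_, ?_⟩ <;> apply mul_left_cancel₀ hd
  · linear_combination e 0
  · linear_combination e 1
  · linear_combination e 2 + (xi1 - xi2) * hadd
  · linear_combination e 3 + (xi1 - xi2) * (xi1 + xi2 + lam3) * hadd - (xi1 - xi2) * hmul

theorem hong_three_point_sum_pow {p3 : ℝ} {M : ℕ → ℝ} (m s : ℝ) (hl : lam3 ^ 2 < lam4)
    (hxi2 : xi2 = lam3 / 2 + √(lam4 - 3 * lam3 ^ 2 / 4))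
    (hxi1 : xi1 = lam3 / 2 - √(lam4 - 3 * lam3 ^ 2 / 4))
    (hp1 : p1 = 1 / (xi1 * (xi1 - xi2))) (hp2 : p2 = -1 / (xi2 * (xi1 - xi2)))
    (hp3 : p3 = 1 - p1 - p2) (hM0 : M 0 = 1) (hM1 : M 1 = 0) (hM2 : M 2 = s ^ 2)
    (hM3 : M 3 = lam3 * s ^ 3) (hM4 : M 4 = lam4 * s ^ 4) :
    ∀ k ≤ 4, ∑ i, ![p1, p2, p3] i * (![m + xi1 * s, m + xi2 * s, m] i - m) ^ k = M k := by
  obtain ⟨e1, e2, e3, e4⟩ := hong_weights_power_sums hl hxi2 hxi1 hp1 hp2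
  intro k hk
  simp only [Fin.sum_univ_three, Matrix.cons_val_zero, Matrix.cons_val_one, Matrix.cons_val,
    add_sub_cancel_left, sub_self, mul_pow]
  interval_cases k
  · rw [hM0]
    linear_combination hp3
  · rw [hM1]
    linear_combination s * e1
  · rw [hM2]
    linear_combination s ^ 2 * e2
  · rw [hM3]
    linear_combination s ^ 3 * e3
  · rw [hM4]
    linear_combination s ^ 4 * e4

end Nodes

theorem hong_three_point_exact_on_deg_le_four
    {Ω : Type*} [MeasureSpace Ω] [IsProbabilityMeasure (ℙ : Measure Ω)]
    (X : Ω → ℝ) (hX : MemLp X 4)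
    (hvar : 0 < variance X ℙ)
    (m s lam3 lam4 xi1 xi2 p1 p2 p3 : ℝ)
    (hm : m = ∫ ω, X ω)
    (hs : s = Real.sqrt (variance X ℙ))
    (hlam3 : lam3 = (∫ ω, (X ω - m) ^ 3) / s ^ 3)
    (hlam4 : lam4 = (∫ ω, (X ω - m) ^ 4) / s ^ 4)
    (hxi2 : xi2 = lam3 / 2 + Real.sqrt (lam4 - 3 * lam3 ^ 2 / 4))
    (hxi1 : xi1 = lam3 / 2 - Real.sqrt (lam4 - 3 * lam3 ^ 2 / 4))
    (hp1 : p1 = 1 / (xi1 * (xi1 - xi2)))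
    (hp2 : p2 = -1 / (xi2 * (xi1 - xi2)))
    (hp3 : p3 = 1 - p1 - p2) :
    ∀ h : Polynomial ℝ, h.degree ≤ 4 →
      p1 * h.eval (m + xi1 * s) + p2 * h.eval (m + xi2 * s) + p3 * h.eval m
        = ∫ ω, h.eval (X ω) := by
  intro h hdeg
  have hs0 : 0 < s := hs ▸ Real.sqrt_pos.mpr hvar
  have hY : MemLp (fun ω ↦ X ω - m) 4 := hX.sub (memLp_const m)
  have hM1 : ∫ ω, (X ω - m) ^ 1 = 0 := by
    simp only [pow_one]
    rw [integral_sub (hX.integrable (by norm_num)) (integrable_const m), ← hm]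
    simp
  have hM2 : ∫ ω, (X ω - m) ^ 2 = s ^ 2 := by
    rw [hs, Real.sq_sqrt (variance_nonneg _ _), variance_eq_integral hX.aemeasurable, hm]
  have hM3 : ∫ ω, (X ω - m) ^ 3 = lam3 * s ^ 3 := by rw [hlam3]; field_simp
  have hM4 : ∫ ω, (X ω - m) ^ 4 = lam4 * s ^ 4 := by rw [hlam4]; field_simp
  have hkurt : lam3 ^ 2 < lam4 := by
    have := sq_integral_pow_three_add_pow_three_le hY (by simpa using hM1) (by rw [hM2]; positivity)
    rw [hM2, hM3, hM4] at this
    nlinarith [pow_pos hs0 6]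
  simpa only [Fin.sum_univ_three, Matrix.cons_val_zero, Matrix.cons_val_one, Matrix.cons_val] using
    sum_mul_eval_eq_integral_eval univ _ _ m hY
      (hong_three_point_sum_pow (M := fun k ↦ ∫ ω, (X ω - m) ^ k) m s hkurt hxi2 hxi1 hp1 hp2 hp3
        (by simp) hM1 hM2 hM3 hM4)
      (natDegree_le_of_degree_le hdeg)
end
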